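/- arXiv:1904.08733 — 3 statements merged into one kernel-verified Lean document; each statement's English description precedes it below -/
import Mathlib

section
/- Let (U_n) be a nested sequence of measurable subsets of Ω with μ(U_n) > 0 for all n and μ(U_n) → 0. Assume that for all sufficiently large integers L the limits α̂_k(L) = lim_{n→∞} μ_{U_n}(τ_{U_n}^{k-1} ≤ L) exist for every k ≥ 1, set α̂_k = lim_{L→∞} α̂_k(L), and assume Σ_{k=1}^∞ k·α̂_k < ∞. Then for every η > 0 there exists L₀ such that for all integers L' > L ≥ L₀ and all n large enough (depending on L and L'): μ({x ∈ U_n : Σ_{i=0}^{L'-L} 1_{U_n}(T^{L+i} x) > 0}) ≤ η·μ(U_n). -/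
open MeasureTheory Filter Topology
open scoped Classical ENNReal

/-- Number of visits of the orbit of `x` to `U` at times `1, …, j`. -/
noncomputable def visits {Ω : Type*} (T : Ω → Ω) (U : Set Ω) (x : Ω) (j : ℕ) : ℕ :=
  ((Finset.Icc 1 j).filter fun i => T^[i] x ∈ U).card

/-- The `ℓ`-th return time to `U` (with value `∞` if undefined, and `τ^0 = 0`). -/
noncomputable def tauIter {Ω : Type*} (T : Ω → Ω) (U : Set Ω) (ℓ : ℕ) (x : Ω) : ℕ∞ :=
  sInf ((fun j : ℕ => (j : ℕ∞)) '' {j : ℕ | ℓ ≤ visits T U x j})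

/-- The conditional probability `μ_U(A) = μ(A ∩ U)/μ(U)` as a real number. -/
noncomputable def condProb {Ω : Type*} [MeasurableSpace Ω] (μ : Measure Ω)
    (U A : Set Ω) : ℝ :=
  (μ (A ∩ U)).toReal / (μ U).toReal

lemma visits_mono {Ω : Type*} (T : Ω → Ω) (U : Set Ω) (x : Ω) :
    Monotone (visits T U x) := fun _ _ hab =>
  Finset.card_le_card (Finset.filter_subset_filter _ (Finset.Icc_subset_Icc_right hab))

lemma tauIter_le_iff {Ω : Type*} (T : Ω → Ω) (U : Set Ω) (ℓ M : ℕ) (x : Ω) :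
    tauIter T U ℓ x ≤ (M : ℕ∞) ↔ ℓ ≤ visits T U x M := by
  constructor
  · intro h
    have h2 : tauIter T U ℓ x < ((M + 1 : ℕ) : ℕ∞) :=
      lt_of_le_of_lt h (by exact_mod_cast Nat.lt_succ_self M)
    rw [tauIter, sInf_lt_iff] at h2
    obtain ⟨a, ⟨j, hj, rfl⟩, hlt⟩ := h2
    have hlt' : (j : ℕ∞) < ((M + 1 : ℕ) : ℕ∞) := hlt
    have hjM : j < M + 1 := by exact_mod_cast hlt'
    exact le_trans hj (visits_mono T U x (Nat.lt_succ_iff.mp hjM))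
  · intro h
    exact sInf_le ⟨M, h, rfl⟩

lemma measurable_visits {Ω : Type*} [MeasurableSpace Ω] {T : Ω → Ω} (hT : Measurable T)
    {U : Set Ω} (hU : MeasurableSet U) (M : ℕ) :
    Measurable fun x => visits T U x M := by
  have : (fun x => visits T U x M)
      = fun x => ∑ i ∈ Finset.Icc 1 M, if T^[i] x ∈ U then 1 else 0 := by
    funext x; rw [visits, Finset.card_filter]
  rw [this]
  exact Finset.measurable_sum _ fun i _ =>
    Measurable.ite (hU.preimage (hT.iterate i)) measurable_const measurable_const

lemma measurableSet_tauIter_le {Ω : Type*} [MeasurableSpace Ω] {T : Ω → Ω} (hT : Measurable T)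
    {U : Set Ω} (hU : MeasurableSet U) (ℓ M : ℕ) :
    MeasurableSet {x | tauIter T U ℓ x ≤ (M : ℕ∞)} := by
  have : {x | tauIter T U ℓ x ≤ (M : ℕ∞)} = {x | ℓ ≤ visits T U x M} := by
    ext x; exact tauIter_le_iff T U ℓ M x
  rw [this]
  exact measurableSet_le measurable_const (measurable_visits hT hU M)

theorem stmt1 {Ω : Type*} [MeasurableSpace Ω]
    (μ : Measure Ω) [IsProbabilityMeasure μ] (T : Ω → Ω)
    (hT : MeasurePreserving T μ μ)
    (U : ℕ → Set Ω) (hUmeas : ∀ n, MeasurableSet (U n))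
    (hnest : ∀ n, U (n + 1) ⊆ U n)
    (hpos : ∀ n, 0 < μ (U n))
    (hto0 : Tendsto (fun n => μ (U n)) atTop (𝓝 0))
    (hatαL : ℕ → ℕ → ℝ) (hatα : ℕ → ℝ) (L₁ : ℕ)
    (hlimL : ∀ L ≥ L₁, ∀ k ≥ 1,
      Tendsto (fun n => condProb μ (U n) {x | tauIter T (U n) (k - 1) x ≤ (L : ℕ∞)})
        atTop (𝓝 (hatαL k L)))
    (hlim : ∀ k ≥ 1, Tendsto (fun L => hatαL k L) atTop (𝓝 (hatα k)))
    (hsum : Summable fun k : ℕ => (k : ℝ) * hatα k) :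
    ∀ η > (0 : ℝ), ∃ L₀ : ℕ, ∀ L' L : ℕ, L₀ ≤ L → L < L' →
      ∃ N : ℕ, ∀ n ≥ N,
        (μ {x | x ∈ U n ∧
            0 < ((Finset.range (L' - L + 1)).filter fun i => T^[L + i] x ∈ U n).card}).toReal
          ≤ η * (μ (U n)).toReal := by
  intro η hη
  have hTm := hT.measurable
  set S : ℕ → ℕ → ℕ → Set Ω := fun n ℓ M => {x | tauIter T (U n) ℓ x ≤ (M : ℕ∞)} with hSdef
  set p : ℕ → ℕ → ℕ → ℝ := fun n ℓ M => condProb μ (U n) (S n ℓ M) with hpdef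
  have hdpos : ∀ n, 0 < (μ (U n)).toReal :=
    fun n => ENNReal.toReal_pos (hpos n).ne' (measure_ne_top μ _)
  -- convergence of p as n → ∞
  have hp_tendsto : ∀ M, L₁ ≤ M → ∀ ℓ : ℕ,
      Tendsto (fun n => p n ℓ M) atTop (𝓝 (hatαL (ℓ + 1) M)) := by
    intro M hM ℓ
    have := hlimL M hM (ℓ + 1) (Nat.le_add_left 1 ℓ)
    simpa using this
  have hp_nonneg : ∀ n ℓ M, 0 ≤ p n ℓ M :=
    fun n ℓ M => div_nonneg ENNReal.toReal_nonneg ENNReal.toReal_nonneg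
  -- monotonicity of S and p in M
  have hS_mono : ∀ n ℓ, ∀ M M' : ℕ, M ≤ M' → S n ℓ M ⊆ S n ℓ M' := by
    intro n ℓ M M' hMM' x hx
    have hx' : tauIter T (U n) ℓ x ≤ (M : ℕ∞) := hx
    have : tauIter T (U n) ℓ x ≤ (M' : ℕ∞) := le_trans hx' (by exact_mod_cast hMM')
    exact this
  have hp_mono : ∀ n ℓ, ∀ M M' : ℕ, M ≤ M' → p n ℓ M ≤ p n ℓ M' := by
    intro n ℓ M M' hMM'
    refine div_le_div_of_nonneg_right ?_ (hdpos n).le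
    exact ENNReal.toReal_mono (measure_ne_top μ _)
      (measure_mono (Set.inter_subset_inter_left _ (hS_mono n ℓ M M' hMM')))
  have hβmono : ∀ ℓ : ℕ, ∀ M M' : ℕ, L₁ ≤ M → M ≤ M' → hatαL (ℓ + 1) M ≤ hatαL (ℓ + 1) M' :=
    fun ℓ M M' hM hMM' => le_of_tendsto_of_tendsto' (hp_tendsto M hM ℓ)
      (hp_tendsto M' (hM.trans hMM') ℓ) (fun n => hp_mono n ℓ M M' hMM')
  have hβle : ∀ ℓ M : ℕ, L₁ ≤ M → hatαL (ℓ + 1) M ≤ hatα (ℓ + 1) := by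
    intro ℓ M hM
    refine ge_of_tendsto (hlim (ℓ + 1) (Nat.le_add_left 1 ℓ)) ?_
    exact eventually_atTop.2 ⟨M, fun M' hM' => hβmono ℓ M M' hM hM'⟩
  have hβ_nonneg : ∀ ℓ M : ℕ, L₁ ≤ M → 0 ≤ hatαL (ℓ + 1) M :=
    fun ℓ M hM => ge_of_tendsto' (hp_tendsto M hM ℓ) (fun n => hp_nonneg n ℓ M)
  have hα_nonneg : ∀ ℓ : ℕ, 0 ≤ hatα (ℓ + 1) :=
    fun ℓ => le_trans (hβ_nonneg ℓ L₁ le_rfl) (hβle ℓ L₁ le_rfl)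
  -- choose K with hatα (K+1) < η/3
  have hη3 : 0 < η / 3 := by linarith
  obtain ⟨j₀, hj₀⟩ := eventually_atTop.1
    ((hsum.tendsto_atTop_zero).eventually (eventually_lt_nhds hη3))
  set K : ℕ := max 1 j₀ with hKdef
  have hK1 : 1 ≤ K := le_max_left _ _
  have hKsmall : hatα (K + 1) < η / 3 := by
    have h1 : ((K + 1 : ℕ) : ℝ) * hatα (K + 1) < η / 3 := hj₀ (K + 1) (by omega)
    have h2 : hatα (K + 1) ≤ ((K + 1 : ℕ) : ℝ) * hatα (K + 1) :=
      le_mul_of_one_le_left (hα_nonneg K) (by exact_mod_cast Nat.le_add_left 1 K)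
    linarith
  -- choose L₀
  have hKcast : (0 : ℝ) < (K : ℝ) := by exact_mod_cast Nat.lt_of_lt_of_le Nat.zero_lt_one hK1
  have hKpos : (0 : ℝ) < 3 * (K : ℝ) := by linarith
  have hcpos : (0 : ℝ) < η / (3 * (K : ℝ)) := div_pos hη hKpos
  have hev : ∀ᶠ M in atTop, ∀ k ∈ Finset.range K,
      hatα (k + 2) - η / (3 * (K : ℝ)) < hatαL (k + 2) M := by
    rw [Filter.eventually_all_finset]
    intro k _
    exact (hlim (k + 2) (by omega)).eventually_const_lt (by linarith)
  obtain ⟨M₀, hM₀⟩ := eventually_atTop.1 hev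
  refine ⟨max (M₀ + 1) (L₁ + 2), ?_⟩
  intro L' L hL hLL'
  have hL1 : 1 ≤ L := le_trans (by omega : 1 ≤ max (M₀ + 1) (L₁ + 2))
    hL
  have hLM₀ : M₀ + 1 ≤ L := le_trans (le_max_left _ _) hL
  have hLL₁ : L₁ + 2 ≤ L := le_trans (le_max_right _ _) hL
  set M1 : ℕ := L - 1 with hM1def
  have hM1L₁ : L₁ ≤ M1 := by omega
  have hM1M₀ : M₀ ≤ M1 := by omega
  have hL'L₁ : L₁ ≤ L' := by omega
  -- the limiting bound ρ
  set ρ : ℝ := ∑ k ∈ Finset.range K, (hatαL (k + 2) L' - hatαL (k + 2) M1)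
      + hatαL (K + 1) M1 with hρdef
  have hρ : ρ < η := by
    have hsumlt : ∑ k ∈ Finset.range K, (hatαL (k + 2) L' - hatαL (k + 2) M1)
        < ∑ _k ∈ Finset.range K, η / (3 * K) := by
      refine Finset.sum_lt_sum_of_nonempty ⟨0, Finset.mem_range.2 (by omega)⟩ ?_
      intro k hk
      have h1 : hatαL (k + 2) L' ≤ hatα (k + 2) := hβle (k + 1) L' hL'L₁
      have h2 : hatα (k + 2) - η / (3 * K) < hatαL (k + 2) M1 := hM₀ M1 hM1M₀ k hk
      linarith
    have hconst : ∑ _k ∈ Finset.range K, η / (3 * K) = η / 3 := by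
      rw [Finset.sum_const, Finset.card_range, nsmul_eq_mul]
      field_simp
    have h3 : hatαL (K + 1) M1 ≤ hatα (K + 1) := hβle K M1 hM1L₁
    rw [hρdef]
    rw [hconst] at hsumlt
    linarith
  -- the n-dependent bound g
  have hgρ : Tendsto (fun n => ∑ k ∈ Finset.range K, (p n (k + 1) L' - p n (k + 1) M1)
      + p n K M1) atTop (𝓝 ρ) := by
    exact (tendsto_finset_sum _ fun k _ =>
      ((hp_tendsto L' hL'L₁ (k + 1)).sub (hp_tendsto M1 hM1L₁ (k + 1)))).add
      (hp_tendsto M1 hM1L₁ K)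
  obtain ⟨N, hN⟩ := eventually_atTop.1 (hgρ.eventually_lt_const hρ)
  refine ⟨N, fun n hn => ?_⟩
  set A : Set Ω := {x | x ∈ U n ∧
      0 < ((Finset.range (L' - L + 1)).filter fun i => T^[L + i] x ∈ U n).card} with hAdef
  -- set inclusion
  have hincl : A ⊆ (⋃ k ∈ Finset.range K, (S n (k + 1) L' \ S n (k + 1) M1)) ∪ S n K M1 := by
    intro x hx
    obtain ⟨hxU, hxcard⟩ := hx
    obtain ⟨i, hi⟩ := Finset.card_pos.1 hxcard
    rw [Finset.mem_filter, Finset.mem_range] at hi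
    obtain ⟨hilt, hiU⟩ := hi
    set m : ℕ := L + i with hmdef
    have hm1 : 1 ≤ m := by omega
    have hmL' : m ≤ L' := by omega
    have hmM1 : ¬ m ≤ M1 := by omega
    -- one more visit by time L'
    have hvis : visits T (U n) x M1 + 1 ≤ visits T (U n) x L' := by
      have hmnot : m ∉ (Finset.Icc 1 M1).filter fun i => T^[i] x ∈ U n := by
        intro hmem
        exact hmM1 (Finset.mem_Icc.1 (Finset.mem_filter.1 hmem).1).2
      have hsub : insert m ((Finset.Icc 1 M1).filter fun i => T^[i] x ∈ U n)
          ⊆ (Finset.Icc 1 L').filter fun i => T^[i] x ∈ U n := by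
        intro a ha
        rcases Finset.mem_insert.1 ha with rfl | ha'
        · exact Finset.mem_filter.2 ⟨Finset.mem_Icc.2 ⟨hm1, hmL'⟩, hiU⟩
        · obtain ⟨haIcc, haU⟩ := Finset.mem_filter.1 ha'
          obtain ⟨h1, h2⟩ := Finset.mem_Icc.1 haIcc
          exact Finset.mem_filter.2 ⟨Finset.mem_Icc.2 ⟨h1, by omega⟩, haU⟩
      calc visits T (U n) x M1 + 1
          = (insert m ((Finset.Icc 1 M1).filter fun i => T^[i] x ∈ U n)).card := by
            rw [Finset.card_insert_of_notMem hmnot]; rfl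
        _ ≤ visits T (U n) x L' := Finset.card_le_card hsub
    rcases le_or_gt K (visits T (U n) x M1) with hKv | hvK
    · exact Or.inr ((tauIter_le_iff T (U n) K M1 x).2 hKv)
    · refine Or.inl (Set.mem_biUnion (Finset.mem_range.2 hvK) ⟨?_, ?_⟩)
      · exact (tauIter_le_iff T (U n) _ L' x).2 hvis
      · intro hmem
        have := (tauIter_le_iff T (U n) _ M1 x).1 hmem
        omega
  -- measurability
  have hSmeas : ∀ ℓ M : ℕ, MeasurableSet (S n ℓ M) :=
    fun ℓ M => measurableSet_tauIter_le hTm (hUmeas n) ℓ M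
  have hAU : A ∩ U n = A := Set.inter_eq_left.mpr (fun x hx => hx.1)
  -- real-valued measure of intersections
  set r : Set Ω → ℝ := fun B => (μ (B ∩ U n)).toReal with hrdef
  -- key inequality in ℝ
  have hkey : r A ≤ ∑ k ∈ Finset.range K,
      (r (S n (k + 1) L') - r (S n (k + 1) M1)) + r (S n K M1) := by
    have h1 : μ (A ∩ U n) ≤ ∑ k ∈ Finset.range K,
        μ ((S n (k + 1) L' \ S n (k + 1) M1) ∩ U n) + μ (S n K M1 ∩ U n) := by
      calc μ (A ∩ U n)
          ≤ μ (((⋃ k ∈ Finset.range K, (S n (k + 1) L' \ S n (k + 1) M1)) ∪ S n K M1) ∩ U n) :=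
            measure_mono (Set.inter_subset_inter_left _ hincl)
        _ = μ ((⋃ k ∈ Finset.range K, ((S n (k + 1) L' \ S n (k + 1) M1) ∩ U n))
              ∪ (S n K M1 ∩ U n)) := by
            rw [Set.union_inter_distrib_right, Set.iUnion_inter]
            simp_rw [Set.iUnion_inter]
        _ ≤ μ (⋃ k ∈ Finset.range K, ((S n (k + 1) L' \ S n (k + 1) M1) ∩ U n))
              + μ (S n K M1 ∩ U n) := measure_union_le _ _
        _ ≤ ∑ k ∈ Finset.range K, μ ((S n (k + 1) L' \ S n (k + 1) M1) ∩ U n)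
              + μ (S n K M1 ∩ U n) := by
            gcongr
            exact measure_biUnion_finset_le _ _
    have hRHSne : ∑ k ∈ Finset.range K, μ ((S n (k + 1) L' \ S n (k + 1) M1) ∩ U n)
        + μ (S n K M1 ∩ U n) ≠ ⊤ := by
      refine ENNReal.add_ne_top.2 ⟨?_, measure_ne_top μ _⟩
      exact (ENNReal.sum_lt_top.2 fun k _ => (measure_ne_top μ _).lt_top).ne
    have h2 : r A ≤ (∑ k ∈ Finset.range K, μ ((S n (k + 1) L' \ S n (k + 1) M1) ∩ U n)
        + μ (S n K M1 ∩ U n)).toReal := ENNReal.toReal_mono hRHSne h1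
    have hdiff : ∀ k : ℕ, (μ ((S n (k + 1) L' \ S n (k + 1) M1) ∩ U n)).toReal
        = r (S n (k + 1) L') - r (S n (k + 1) M1) := by
      intro k
      have hset : (S n (k + 1) L' \ S n (k + 1) M1) ∩ U n
          = (S n (k + 1) L' ∩ U n) \ (S n (k + 1) M1 ∩ U n) := by
        ext x
        simp only [Set.mem_inter_iff, Set.mem_diff]
        tauto
      rw [hset, measure_diff (Set.inter_subset_inter_left _ (hS_mono n (k + 1) M1 L' (by omega)))
        ((hSmeas (k + 1) M1).inter (hUmeas n)).nullMeasurableSet (measure_ne_top μ _)]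
      exact ENNReal.toReal_sub_of_le
        (measure_mono (Set.inter_subset_inter_left _ (hS_mono n (k + 1) M1 L' (by omega))))
        (measure_ne_top μ _)
    rw [ENNReal.toReal_add (ENNReal.sum_lt_top.2 fun k _ => (measure_ne_top μ _).lt_top).ne
      (measure_ne_top μ _), ENNReal.toReal_sum (fun k _ => measure_ne_top μ _)] at h2
    calc r A ≤ ∑ k ∈ Finset.range K, (μ ((S n (k + 1) L' \ S n (k + 1) M1) ∩ U n)).toReal
          + (μ (S n K M1 ∩ U n)).toReal := h2
      _ = ∑ k ∈ Finset.range K, (r (S n (k + 1) L') - r (S n (k + 1) M1)) + r (S n K M1) := by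
          rw [Finset.sum_congr rfl fun k _ => hdiff k]
  -- conclude
  have hgn : ∑ k ∈ Finset.range K, (p n (k + 1) L' - p n (k + 1) M1) + p n K M1 < η :=
    hN n hn
  have hcond : r A / (μ (U n)).toReal
      ≤ ∑ k ∈ Finset.range K, (p n (k + 1) L' - p n (k + 1) M1) + p n K M1 := by
    have heq : (∑ k ∈ Finset.range K, (r (S n (k + 1) L') - r (S n (k + 1) M1)) + r (S n K M1))
        / (μ (U n)).toReal
        = ∑ k ∈ Finset.range K, (p n (k + 1) L' - p n (k + 1) M1) + p n K M1 := by
      rw [add_div, Finset.sum_div]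
      simp only [hpdef, condProb, hrdef, sub_div]
    rw [← heq]
    exact div_le_div_of_nonneg_right hkey (hdpos n).le
  have hfin : r A / (μ (U n)).toReal < η := lt_of_le_of_lt hcond hgn
  have : r A < η * (μ (U n)).toReal := (div_lt_iff₀ (hdpos n)).1 hfin
  have hrA : r A = (μ A).toReal := by rw [hrdef]; simp only [hAU]
  rw [hrA] at this
  exact this.le
end

section
/- Let Ω be a Hausdorff topological space, T : Ω → Ω continuous, and let (U_n) be a nested sequence (U_{n+1} ⊆ U_n) of nonempty compact subsets of Ω with ⋂_n U_n = {x} for some x ∈ Ω. For a nonempty set U ⊆ Ω define its period τ(U) = inf{ j ≥ 1 : U ∩ T^{-j}U ≠ ∅ } (equal to ∞ if no such j exists). Then the sequence (τ(U_n))_n is bounded if and only if x is a periodic point of T, i.e. there exists m ≥ 1 with T^m x = x. -/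
open scoped ENNReal

/-- The period of a set `U`: `τ(U) = inf { j ≥ 1 : U ∩ T⁻ʲU ≠ ∅ }`, with value `∞`
if no such `j` exists. -/
noncomputable def setPeriod {Ω : Type*} (T : Ω → Ω) (U : Set Ω) : ℕ∞ :=
  sInf ((fun j : ℕ => (j : ℕ∞)) '' {j : ℕ | 1 ≤ j ∧ (U ∩ T^[j] ⁻¹' U).Nonempty})

theorem stmt13 {Ω : Type*} [TopologicalSpace Ω] [T2Space Ω]
    (T : Ω → Ω) (hT : Continuous T)
    (U : ℕ → Set Ω)
    (hne : ∀ n, (U n).Nonempty)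
    (hcomp : ∀ n, IsCompact (U n))
    (hnest : ∀ n, U (n + 1) ⊆ U n)
    (x : Ω) (hx : ⋂ n, U n = {x}) :
    (∃ C : ℕ, ∀ n, setPeriod T (U n) ≤ (C : ℕ∞)) ↔ (∃ m : ℕ, 1 ≤ m ∧ T^[m] x = x) := by
  have hanti : Antitone U := antitone_nat_of_succ_le hnest
  have hxU : ∀ n, x ∈ U n := by
    intro n
    have h1 : x ∈ ⋂ n, U n := by rw [hx]; exact Set.mem_singleton x
    exact Set.mem_iInter.mp h1 n
  constructor
  · rintro ⟨C, hC⟩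
    have key : ∀ n, ∃ j, 1 ≤ j ∧ j ≤ C ∧ (U n ∩ T^[j] ⁻¹' U n).Nonempty := by
      intro n
      by_contra h
      push_neg at h
      have hCn : (C : ℕ∞) + 1 ≤ setPeriod T (U n) := by
        apply le_sInf
        rintro a ⟨j, ⟨hj1, hjne⟩, rfl⟩
        have hCj : C + 1 ≤ j := by
          by_contra hle
          push_neg at hle
          exact absurd (h j hj1 (by omega)) hjne.ne_empty
        have h2 : ((C + 1 : ℕ) : ℕ∞) ≤ (j : ℕ∞) := Nat.cast_le.mpr hCj
        simpa using h2
      have : (C : ℕ∞) + 1 ≤ (C : ℕ∞) := hCn.trans (hC n)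
      have : C + 1 ≤ C := by exact_mod_cast this
      omega
    choose f hf1 hfC hfne using key
    have : ∃ b : Fin (C + 1), (fun n => (⟨f n, by have := hfC n; omega⟩ : Fin (C + 1))) ⁻¹' {b} |>.Infinite := by
      obtain ⟨b, hb⟩ := Finite.exists_infinite_fiber
        (fun n => (⟨f n, by have := hfC n; omega⟩ : Fin (C + 1)))
      exact ⟨b, Set.infinite_coe_iff.mp hb⟩
    obtain ⟨b, hb⟩ := this
    set j := (b : ℕ) with hj
    have hVne : ∀ n, (U n ∩ T^[j] ⁻¹' U n).Nonempty := by
      intro n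
      obtain ⟨m, hmmem, hnm⟩ := hb.exists_gt n
      have hfm : f m = j := by
        simpa [Fin.ext_iff] using hmmem
      have hsub : U m ∩ T^[f m] ⁻¹' U m ⊆ U n ∩ T^[f m] ⁻¹' U n :=
        Set.inter_subset_inter (hanti hnm.le)
          (Set.preimage_mono (hanti hnm.le))
      have h3 := (hfne m).mono hsub
      rwa [hfm] at h3
    have hj1 : 1 ≤ j := by
      obtain ⟨m, hmmem, _⟩ := hb.exists_gt 0
      have hfm : f m = j := by simpa [Fin.ext_iff] using hmmem
      rw [← hfm]; exact hf1 m
    have hclosed : ∀ n, IsClosed (U n ∩ T^[j] ⁻¹' U n) := fun n =>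
      ((hcomp n).isClosed).inter (((hcomp n).isClosed).preimage (hT.iterate j))
    have hcomp' : ∀ n, IsCompact (U n ∩ T^[j] ⁻¹' U n) := fun n =>
      (hcomp n).inter_right (((hcomp n).isClosed).preimage (hT.iterate j))
    have hnest' : ∀ n, U (n + 1) ∩ T^[j] ⁻¹' U (n + 1) ⊆ U n ∩ T^[j] ⁻¹' U n := fun n =>
      Set.inter_subset_inter (hnest n) (Set.preimage_mono (hnest n))
    obtain ⟨y, hy⟩ := IsCompact.nonempty_iInter_of_sequence_nonempty_isCompact_isClosed
      _ hnest' hVne (hcomp' 0) hclosed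
    have hy1 : y ∈ ⋂ n, U n := Set.mem_iInter.mpr fun n => (Set.mem_iInter.mp hy n).1
    have hy2 : T^[j] y ∈ ⋂ n, U n := Set.mem_iInter.mpr fun n => (Set.mem_iInter.mp hy n).2
    rw [hx, Set.mem_singleton_iff] at hy1 hy2
    refine ⟨j, hj1, ?_⟩
    subst hy1
    exact hy2
  · rintro ⟨m, hm1, hmx⟩
    refine ⟨m, fun n => ?_⟩
    apply sInf_le
    exact ⟨m, ⟨hm1, ⟨x, hxU n, by simp [hmx, hxU n]⟩⟩, rfl⟩
end

section
/- Let Ω be a Hausdorff topological space, T : Ω → Ω continuous, and let (U_n) be a nested sequence (U_{n+1} ⊆ U_n) of nonempty compact subsets of Ω with ⋂_n U_n = {x}, where x is a periodic point of T with minimal period m (i.e. T^m x = x and T^j x ≠ x for 1 ≤ j < m). For U ⊆ Ω define τ(U) = inf{ j ≥ 1 : U ∩ T^{-j}U ≠ ∅ }. Then there exists N such that τ(U_n) = m for all n ≥ N. -/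
open scoped ENNReal

theorem stmt14 {Ω : Type*} [TopologicalSpace Ω] [T2Space Ω]
    (T : Ω → Ω) (hT : Continuous T)
    (U : ℕ → Set Ω)
    (hne : ∀ n, (U n).Nonempty)
    (hcomp : ∀ n, IsCompact (U n))
    (hnest : ∀ n, U (n + 1) ⊆ U n)
    (x : Ω) (hx : ⋂ n, U n = {x})
    (m : ℕ) (hm : 1 ≤ m) (hper : T^[m] x = x)
    (hmin : ∀ j, 1 ≤ j → j < m → T^[j] x ≠ x) :
    ∃ N : ℕ, ∀ n ≥ N, setPeriod T (U n) = (m : ℕ∞) := by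
  have hanti : Antitone U := antitone_nat_of_succ_le hnest
  have hxU : ∀ n, x ∈ U n := by
    intro n
    have : x ∈ ⋂ n, U n := by rw [hx]; exact rfl
    exact Set.mem_iInter.mp this n
  -- for each 1 ≤ j < m, eventually U n ∩ T^[j] ⁻¹' (U n) = ∅
  have key : ∀ j, 1 ≤ j → j < m → ∃ N, ∀ n ≥ N, (U n ∩ T^[j] ⁻¹' (U n)) = ∅ := by
    intro j hj1 hjm
    by_contra h
    push_neg at h
    set K : ℕ → Set Ω := fun n => U n ∩ T^[j] ⁻¹' (U n) with hK
    have hKmono : ∀ {a b : ℕ}, a ≤ b → K b ⊆ K a := fun {a b} hab =>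
      Set.inter_subset_inter (hanti hab) (Set.preimage_mono (hanti hab))
    have hKne : ∀ n, (K n).Nonempty := by
      intro n
      obtain ⟨n', hn', hne'⟩ := h n
      rw [Set.nonempty_iff_ne_empty] at hne' ⊢
      intro hemp
      exact hne' (Set.subset_eq_empty (hKmono hn') hemp)
    have hKclosed : ∀ n, IsClosed (K n) := fun n =>
      ((hcomp n).isClosed).inter (((hcomp n).isClosed).preimage (hT.iterate j))
    have hKnest : ∀ n, K (n + 1) ⊆ K n := fun n => hKmono (Nat.le_succ n)
    have hK0 : IsCompact (K 0) :=
      (hcomp 0).inter_right (((hcomp 0).isClosed).preimage (hT.iterate j))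
    obtain ⟨y, hy⟩ :=
      IsCompact.nonempty_iInter_of_sequence_nonempty_isCompact_isClosed K hKnest hKne hK0 hKclosed
    have hy1 : y ∈ ⋂ n, U n := Set.mem_iInter.mpr fun n => (Set.mem_iInter.mp hy n).1
    have hy2 : T^[j] y ∈ ⋂ n, U n := Set.mem_iInter.mpr fun n => (Set.mem_iInter.mp hy n).2
    rw [hx] at hy1 hy2
    have hyx : y = x := hy1
    subst hyx
    have : T^[j] y = y := hy2
    exact hmin j hj1 hjm this
  -- choose N
  choose! N hN using key
  refine ⟨Finset.sup (Finset.range m) N, fun n hn => ?_⟩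
  have hnj : ∀ j, 1 ≤ j → j < m → (U n ∩ T^[j] ⁻¹' (U n)) = ∅ := by
    intro j hj1 hjm
    exact hN j hj1 hjm n (le_trans (Finset.le_sup (Finset.mem_range.mpr hjm)) hn)
  unfold setPeriod
  apply le_antisymm
  · apply csInf_le (OrderBot.bddBelow _)
    exact ⟨m, ⟨hm, ⟨x, hxU n, by simpa [hper] using hxU n⟩⟩, rfl⟩
  · apply le_sInf
    rintro b ⟨j, ⟨hj1, hjne⟩, rfl⟩
    by_contra hlt
    push_neg at hlt
    have hjm : j < m := by exact_mod_cast hlt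
    rw [hnj j hj1 hjm] at hjne
    exact Set.not_nonempty_empty hjne
end
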